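/- The eager-reserve optimization instance built from a graph computes the independence number: let G be a finite simple graph on vertex set V = Fin m with edge set E, and let 0 < L < H < 2L. Build the following finite family of bid vectors on m bidders: for each edge {u, v} ∈ E, a vector with b u = b v = L and all other entries 0; and for each vertex u ∈ V, a vector with b u = H and all other entries 0. Then the supremum over all reserve vectors r of the total eager revenue over this family equals L·(|E| + |V|) + (H − L)·α(G), where α(G) is the maximum size of an independent set in G. -/
import Mathlib


open MeasureTheory Finset
open scoped Classical ENNReal

noncomputable def lazyWinner {n : ℕ} (b : Fin (n + 1) → ℝ) : Fin (n + 1) :=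
  (Finset.univ.filter fun i => ∀ j, b j ≤ b i).min' (by
    obtain ⟨i, -, hi⟩ := Finset.exists_max_image Finset.univ b ⟨0, Finset.mem_univ 0⟩
    exact ⟨i, Finset.mem_filter.mpr ⟨Finset.mem_univ i, fun j => hi j (Finset.mem_univ j)⟩⟩)

noncomputable def secondMax {n : ℕ} (b : Fin (n + 1) → ℝ) : ℝ :=
  (Finset.univ.erase (lazyWinner b)).fold max 0 b

/-- Revenue of the second price auction with lazy reserves. -/
noncomputable def lazyRev {n : ℕ} (b r : Fin (n + 1) → ℝ) : ℝ :=
  if r (lazyWinner b) ≤ b (lazyWinner b) then max (r (lazyWinner b)) (secondMax b) else 0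

/-- The least-index bidder among those meeting their reserve attaining the highest bid. -/
noncomputable def eagerWinner {n : ℕ} (b r : Fin (n + 1) → ℝ)
    (hS : (Finset.univ.filter fun i => r i ≤ b i).Nonempty) : Fin (n + 1) :=
  ((Finset.univ.filter fun i => r i ≤ b i).filter
      fun i => ∀ k ∈ Finset.univ.filter (fun i => r i ≤ b i), b k ≤ b i).min' (by
    obtain ⟨i, hi, hmax⟩ := Finset.exists_max_image _ b hS
    exact ⟨i, Finset.mem_filter.mpr ⟨hi, hmax⟩⟩)

/-- Revenue of the second price auction with eager reserves. -/
noncomputable def eagerRev {n : ℕ} (b r : Fin (n + 1) → ℝ) : ℝ :=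
  if hS : (Finset.univ.filter fun i => r i ≤ b i).Nonempty then
    max (r (eagerWinner b r hS))
      (((Finset.univ.filter fun i => r i ≤ b i).erase (eagerWinner b r hS)).fold max 0 b)
  else 0

lemma fold_max_zero {α : Type*} (s : Finset α) (f : α → ℝ) (h : ∀ i ∈ s, f i ≤ 0) :
    s.fold max 0 f = 0 :=
  le_antisymm ((Finset.fold_max_le _).2 ⟨le_rfl, h⟩) ((Finset.le_fold_max _).2 (Or.inl le_rfl))

lemma fold_max_eq {α : Type*} (s : Finset α) (f : α → ℝ) (c : ℝ) (hc : 0 ≤ c)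
    (hub : ∀ i ∈ s, f i ≤ c) (hmem : ∃ i ∈ s, c ≤ f i) :
    s.fold max 0 f = c := by
  refine le_antisymm ((Finset.fold_max_le _).2 ⟨hc, hub⟩) ?_
  obtain ⟨i, hi, hci⟩ := hmem
  exact (Finset.le_fold_max _).2 (Or.inr ⟨i, hi, hci⟩)

lemma eagerWinner_spec {n : ℕ} (b r : Fin (n + 1) → ℝ)
    (hS : (Finset.univ.filter fun i => r i ≤ b i).Nonempty) :
    eagerWinner b r hS ∈ (Finset.univ.filter fun i => r i ≤ b i) ∧
      ∀ k ∈ (Finset.univ.filter fun i => r i ≤ b i), b k ≤ b (eagerWinner b r hS) := by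
  have h : eagerWinner b r hS ∈ ((Finset.univ.filter fun i => r i ≤ b i).filter
      fun i => ∀ k ∈ Finset.univ.filter (fun i => r i ≤ b i), b k ≤ b i) := by
    unfold eagerWinner; exact Finset.min'_mem _ _
  exact Finset.mem_filter.1 h

lemma eagerRev_zero {n : ℕ} (b r : Fin (n + 1) → ℝ) (hr : ∀ i, 0 ≤ r i)
    (h : ∀ i, r i ≤ b i → b i ≤ 0) : eagerRev b r = 0 := by
  unfold eagerRev
  split_ifs with hS
  · obtain ⟨hwS, -⟩ := eagerWinner_spec b r hS
    have hrw : r (eagerWinner b r hS) ≤ b (eagerWinner b r hS) := (Finset.mem_filter.1 hwS).2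
    have hrw0 : r (eagerWinner b r hS) = 0 :=
      le_antisymm (hrw.trans (h _ hrw)) (hr _)
    have hfold : ((Finset.univ.filter fun i => r i ≤ b i).erase
        (eagerWinner b r hS)).fold max 0 b = 0 := by
      apply fold_max_zero
      intro i hi
      have hiS := Finset.mem_erase.1 hi
      exact h i (Finset.mem_filter.1 hiS.2).2
    rw [hrw0, hfold, max_self]
  · rfl

lemma eagerRev_unique {n : ℕ} (b r : Fin (n + 1) → ℝ) (hr : ∀ i, 0 ≤ r i) (u : Fin (n + 1))
    (hu : r u ≤ b u) (hpos : 0 < b u)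
    (hlose : ∀ j, j ≠ u → r j ≤ b j → b j = 0) :
    eagerRev b r = r u := by
  have huS : u ∈ Finset.univ.filter (fun i => r i ≤ b i) := by simp [hu]
  have hS : (Finset.univ.filter fun i => r i ≤ b i).Nonempty := ⟨u, huS⟩
  have hF : ((Finset.univ.filter fun i => r i ≤ b i).filter
      fun i => ∀ k ∈ Finset.univ.filter (fun i => r i ≤ b i), b k ≤ b i) = {u} := by
    ext k
    simp only [Finset.mem_filter, Finset.mem_univ, true_and, Finset.mem_singleton]
    constructor
    · rintro ⟨hk, htop⟩
      by_contra hku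
      have h0 : b k = 0 := hlose k hku hk
      have := htop u hu
      linarith
    · intro hk
      subst hk
      refine ⟨hu, fun j hj => ?_⟩
      rcases eq_or_ne j k with rfl | hju
      · exact le_rfl
      · rw [hlose j hju hj]; exact hpos.le
  have hw : eagerWinner b r hS = u := by
    have hmem : eagerWinner b r hS ∈ ((Finset.univ.filter fun i => r i ≤ b i).filter
        fun i => ∀ k ∈ Finset.univ.filter (fun i => r i ≤ b i), b k ≤ b i) := by
      unfold eagerWinner; exact Finset.min'_mem _ _
    rw [hF] at hmem
    exact Finset.mem_singleton.1 hmem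
  unfold eagerRev
  rw [dif_pos hS, hw]
  have hfold : ((Finset.univ.filter fun i => r i ≤ b i).erase u).fold max 0 b = 0 := by
    apply fold_max_zero
    intro i hi
    obtain ⟨hiu, hiS⟩ := Finset.mem_erase.1 hi
    rw [hlose i hiu (Finset.mem_filter.1 hiS).2]
  rw [hfold, max_eq_left (hr u)]

lemma eagerRev_pair {n : ℕ} (b r : Fin (n + 1) → ℝ) (hr : ∀ i, 0 ≤ r i)
    (u v : Fin (n + 1)) (huv : u ≠ v)
    (hu : r u ≤ b u) (hv : r v ≤ b v) (hb : b v = b u) (hpos : 0 < b u)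
    (hlose : ∀ j, j ≠ u → j ≠ v → b j = 0) :
    eagerRev b r = b u := by
  have huS : u ∈ Finset.univ.filter (fun i => r i ≤ b i) := by simp [hu]
  have hvS : v ∈ Finset.univ.filter (fun i => r i ≤ b i) := by simp [hv]
  have hS : (Finset.univ.filter fun i => r i ≤ b i).Nonempty := ⟨u, huS⟩
  obtain ⟨hwS, hwtop⟩ := eagerWinner_spec b r hS
  have hball : ∀ j, b j ≤ b u := by
    intro j
    rcases eq_or_ne j u with rfl | h1
    · exact le_rfl
    rcases eq_or_ne j v with rfl | h2
    · exact hb.le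
    · rw [hlose j h1 h2]; exact hpos.le
  have hbw : b (eagerWinner b r hS) = b u := le_antisymm (hball _) (hwtop u huS)
  have hrw : r (eagerWinner b r hS) ≤ b u := by
    have := (Finset.mem_filter.1 hwS).2
    linarith [hbw]
  have hother : ∃ o ∈ (Finset.univ.filter fun i => r i ≤ b i).erase (eagerWinner b r hS),
      b u ≤ b o := by
    rcases eq_or_ne (eagerWinner b r hS) u with he | he
    · exact ⟨v, Finset.mem_erase.2 ⟨by rw [he]; exact huv.symm, hvS⟩, hb.ge⟩
    · exact ⟨u, Finset.mem_erase.2 ⟨Ne.symm he, huS⟩, le_rfl⟩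
  unfold eagerRev
  rw [dif_pos hS]
  have hfold : ((Finset.univ.filter fun i => r i ≤ b i).erase
      (eagerWinner b r hS)).fold max 0 b = b u :=
    fold_max_eq _ b (b u) hpos.le (fun i _ => hball i) hother
  rw [hfold, max_eq_right hrw]

lemma vertex_rev {n : ℕ} (r : Fin (n + 1) → ℝ) (hr : ∀ i, 0 ≤ r i) (H : ℝ) (hH : 0 < H)
    (u : Fin (n + 1)) :
    eagerRev (fun i => if i = u then H else 0) r = if r u ≤ H then r u else 0 := by
  by_cases h : r u ≤ H
  · rw [if_pos h]
    refine eagerRev_unique _ r hr u (by simp [h]) (by simp [hH]) (fun j hj _ => by simp [hj])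
  · rw [if_neg h]
    refine eagerRev_zero _ r hr (fun i hi => ?_)
    rcases eq_or_ne i u with rfl | hiu
    · simp only [if_pos rfl] at hi; exact absurd hi h
    · simp [hiu]

lemma edge_rev {n : ℕ} (r : Fin (n + 1) → ℝ) (hr : ∀ i, 0 ≤ r i) (L : ℝ) (hL : 0 < L)
    (u v : Fin (n + 1)) (huv : u ≠ v) :
    eagerRev (fun i => if i = u ∨ i = v then L else 0) r =
      if r u ≤ L then (if r v ≤ L then L else r u)
      else (if r v ≤ L then r v else 0) := by
  by_cases hu : r u ≤ L <;> by_cases hv : r v ≤ L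
  · rw [if_pos hu, if_pos hv]
    have := eagerRev_pair (fun i => if i = u ∨ i = v then L else 0) r hr u v huv
      (by simp [hu]) (by simp [hv]) (by simp) (by simp [hL])
      (fun j h1 h2 => by simp [h1, h2])
    simpa using this
  · rw [if_pos hu, if_neg hv]
    refine eagerRev_unique _ r hr u (by simp [hu]) (by simp [hL]) (fun j hj hrj => ?_)
    rcases eq_or_ne j v with rfl | hjv
    · rw [if_pos (Or.inr rfl)] at hrj; exact absurd hrj hv
    · simp [hj, hjv]
  · rw [if_neg hu, if_pos hv]
    refine eagerRev_unique _ r hr v (by simp [hv]) (by simp [hL]) (fun j hj hrj => ?_)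
    rcases eq_or_ne j u with rfl | hju
    · rw [if_pos (Or.inl rfl)] at hrj; exact absurd hrj hu
    · simp [hj, hju]
  · rw [if_neg hu, if_neg hv]
    refine eagerRev_zero _ r hr (fun i hi => ?_)
    rcases eq_or_ne i u with rfl | hiu
    · rw [if_pos (Or.inl rfl)] at hi; exact absurd hi hu
    rcases eq_or_ne i v with rfl | hiv
    · rw [if_pos (Or.inr rfl)] at hi; exact absurd hi hv
    · simp [hiu, hiv]

lemma indep_bound {m : ℕ} (G : SimpleGraph (Fin (m + 1))) [DecidableRel G.Adj]
    (T : Finset (Fin (m + 1))) :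
    ∃ s, s ⊆ T ∧ (∀ u ∈ s, ∀ v ∈ s, ¬ G.Adj u v) ∧
      T.card ≤ s.card + (G.edgeFinset.filter fun e => ∀ x ∈ e, x ∈ T).card := by
  induction T using Finset.strongInduction with
  | _ T ih =>
    by_cases hind : ∀ u ∈ T, ∀ v ∈ T, ¬ G.Adj u v
    · exact ⟨T, Finset.Subset.refl T, hind, Nat.le_add_right _ _⟩
    · push_neg at hind
      obtain ⟨u, hu, v, hv, hadj⟩ := hind
      have hss : T.erase u ⊂ T := Finset.erase_ssubset hu
      obtain ⟨s, hsT, hsi, hcard⟩ := ih (T.erase u) hss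
      refine ⟨s, hsT.trans (Finset.erase_subset _ _), hsi, ?_⟩
      have hmem : s(u, v) ∈ G.edgeFinset.filter (fun e => ∀ x ∈ e, x ∈ T) := by
        refine Finset.mem_filter.2 ⟨SimpleGraph.mem_edgeFinset.2 hadj, ?_⟩
        intro x hx
        rcases Sym2.mem_iff.1 hx with rfl | rfl
        · exact hu
        · exact hv
      have hsub : G.edgeFinset.filter (fun e => ∀ x ∈ e, x ∈ T.erase u) ⊆
          (G.edgeFinset.filter (fun e => ∀ x ∈ e, x ∈ T)).erase s(u, v) := by
        intro e he
        obtain ⟨heE, heT⟩ := Finset.mem_filter.1 he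
        refine Finset.mem_erase.2 ⟨?_, Finset.mem_filter.2 ⟨heE,
          fun x hx => Finset.mem_of_mem_erase (heT x hx)⟩⟩
        rintro rfl
        exact Finset.notMem_erase u T (heT u (Sym2.mem_mk_left u v))
      have hle := Finset.card_le_card hsub
      rw [Finset.card_erase_of_mem hmem] at hle
      have hpos : 1 ≤ (G.edgeFinset.filter (fun e => ∀ x ∈ e, x ∈ T)).card :=
        Finset.card_pos.2 ⟨_, hmem⟩
      have hTc : T.card = (T.erase u).card + 1 := (Finset.card_erase_add_one hu).symm
      omega

theorem eager_optimization_computes_independence_number {m : ℕ}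
    (G : SimpleGraph (Fin (m + 1))) [DecidableRel G.Adj]
    (L H : ℝ) (hL : 0 < L) (hLH : L < H) (hH : H < 2 * L) :
    sSup {x : ℝ | ∃ r : Fin (m + 1) → ℝ, (∀ i, 0 ≤ r i) ∧
        x = (∑ e ∈ G.edgeFinset, eagerRev (fun i => if i ∈ e then L else 0) r) +
            ∑ u : Fin (m + 1), eagerRev (fun i => if i = u then H else 0) r} =
      L * ((G.edgeFinset.card : ℝ) + (m + 1)) +
        (H - L) * (sSup {k : ℕ | ∃ s : Finset (Fin (m + 1)),
          (∀ u ∈ s, ∀ v ∈ s, ¬ G.Adj u v) ∧ s.card = k} : ℕ) := by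
  classical
  set A : Set ℕ := {k : ℕ | ∃ s : Finset (Fin (m + 1)),
      (∀ u ∈ s, ∀ v ∈ s, ¬ G.Adj u v) ∧ s.card = k} with hAdef
  have hA0 : (0 : ℕ) ∈ A := ⟨∅, by simp, by simp⟩
  have hAbdd : BddAbove A := by
    refine ⟨m + 1, ?_⟩
    rintro k ⟨s, -, rfl⟩
    calc s.card ≤ Finset.univ.card := Finset.card_le_univ s
      _ = m + 1 := by simp
  obtain ⟨s₀, hs₀i, hs₀c⟩ := Nat.sSup_mem ⟨0, hA0⟩ hAbdd
  set a : ℕ := sSup A with hadef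
  -- upper bound for every reserve vector
  have key : ∀ r : Fin (m + 1) → ℝ, (∀ i, 0 ≤ r i) →
      (∑ e ∈ G.edgeFinset, eagerRev (fun i => if i ∈ e then L else 0) r) +
        ∑ u : Fin (m + 1), eagerRev (fun i => if i = u then H else 0) r ≤
      L * ((G.edgeFinset.card : ℝ) + (m + 1)) + (H - L) * a := by
    intro r hr
    set T : Finset (Fin (m + 1)) := Finset.univ.filter (fun u => L < r u) with hTdef
    have hmemT : ∀ u, u ∈ T ↔ L < r u := by intro u; simp [hTdef]
    have hv : ∀ u : Fin (m + 1), eagerRev (fun i => if i = u then H else 0) r ≤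
        L + (if u ∈ T then H - L else 0) := by
      intro u
      rw [vertex_rev r hr H (hL.trans hLH) u]
      by_cases h1 : r u ≤ H
      · rw [if_pos h1]
        by_cases h2 : u ∈ T
        · rw [if_pos h2]; linarith
        · rw [if_neg h2]
          have h3 : ¬ L < r u := fun h => h2 ((hmemT u).2 h)
          linarith [not_lt.1 h3]
      · rw [if_neg h1]
        by_cases h2 : u ∈ T
        · rw [if_pos h2]; linarith
        · rw [if_neg h2]; linarith
    have hvsum : (∑ u : Fin (m + 1), eagerRev (fun i => if i = u then H else 0) r) ≤
        L * (m + 1) + (H - L) * T.card := by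
      calc (∑ u : Fin (m + 1), eagerRev (fun i => if i = u then H else 0) r)
          ≤ ∑ u : Fin (m + 1), (L + (if u ∈ T then H - L else 0)) :=
            Finset.sum_le_sum (fun u _ => hv u)
        _ = L * (m + 1) + (H - L) * T.card := by
            rw [Finset.sum_add_distrib, Finset.sum_const, Finset.sum_ite_mem,
              Finset.univ_inter, Finset.sum_const]
            simp only [Finset.card_univ, Fintype.card_fin, nsmul_eq_mul]
            push_cast
            ring
    have he : ∀ e ∈ G.edgeFinset, eagerRev (fun i => if i ∈ e then L else 0) r ≤
        (if (∀ x ∈ e, x ∈ T) then 0 else L) := by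
      intro e he
      induction e using Sym2.ind with
      | _ u v =>
        have hadj : G.Adj u v := SimpleGraph.mem_edgeFinset.1 he
        have huv : u ≠ v := hadj.ne
        have hbid : (fun i => if i ∈ s(u, v) then L else 0) =
            (fun i => if i = u ∨ i = v then L else 0) := by
          funext i; simp [Sym2.mem_iff]
        rw [hbid, edge_rev r hr L hL u v huv]
        have hmem : (∀ x ∈ s(u, v), x ∈ T) ↔ (L < r u ∧ L < r v) := by
          simp [Sym2.mem_iff, hTdef]
        by_cases hc : ∀ x ∈ s(u, v), x ∈ T
        · rw [if_pos hc]
          obtain ⟨h1, h2⟩ := hmem.1 hc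
          rw [if_neg (not_le.2 h1), if_neg (not_le.2 h2)]
        · rw [if_neg hc]
          split_ifs with g1 g2 g2
          · exact le_rfl
          · exact g1
          · exact g2
          · exact hL.le
    set k : ℕ := (G.edgeFinset.filter fun e => ∀ x ∈ e, x ∈ T).card with hkdef
    have hesum : (∑ e ∈ G.edgeFinset, eagerRev (fun i => if i ∈ e then L else 0) r)
        ≤ L * ((G.edgeFinset.card : ℝ) - k) := by
      calc (∑ e ∈ G.edgeFinset, eagerRev (fun i => if i ∈ e then L else 0) r)
          ≤ ∑ e ∈ G.edgeFinset, (if (∀ x ∈ e, x ∈ T) then 0 else L) :=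
            Finset.sum_le_sum he
        _ = L * ((G.edgeFinset.card : ℝ) - k) := by
            rw [Finset.sum_ite, Finset.sum_const, Finset.sum_const]
            have hc := Finset.card_filter_add_card_filter_not
              (s := G.edgeFinset) (p := fun e => ∀ x ∈ e, x ∈ T)
            have hcast : ((G.edgeFinset.filter fun e => ¬ ∀ x ∈ e, x ∈ T).card : ℝ)
                = (G.edgeFinset.card : ℝ) - k := by
              have h2 : ((k : ℝ)) +
                  ((G.edgeFinset.filter fun e => ¬ ∀ x ∈ e, x ∈ T).card : ℝ)
                  = (G.edgeFinset.card : ℝ) := by exact_mod_cast hc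
              linarith
            simp only [smul_zero, zero_add, nsmul_eq_mul]
            rw [hcast]; ring
    obtain ⟨s₁, hs₁T, hs₁i, hs₁c⟩ := indep_bound G T
    have hs₁a : s₁.card ≤ a := le_csSup hAbdd ⟨s₁, hs₁i, rfl⟩
    have hTak : (T.card : ℝ) ≤ (a : ℝ) + (k : ℝ) := by
      have h0 : T.card ≤ a + k := hs₁c.trans (Nat.add_le_add_right hs₁a k)
      exact_mod_cast h0
    have hk0 : (0 : ℝ) ≤ (k : ℝ) := Nat.cast_nonneg k
    have h1 : (H - L) * (T.card : ℝ) ≤ (H - L) * ((a : ℝ) + k) :=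
      mul_le_mul_of_nonneg_left hTak (by linarith)
    have h2 : (H - L) * (k : ℝ) ≤ L * k :=
      mul_le_mul_of_nonneg_right (by linarith) hk0
    have h3 : (H - L) * ((a : ℝ) + k) = (H - L) * a + (H - L) * k := by ring
    linarith
  -- the optimal reserve vector
  set r₀ : Fin (m + 1) → ℝ := fun u => if u ∈ s₀ then H else L with hr₀def
  have hr₀ : ∀ i, 0 ≤ r₀ i := by
    intro i; simp only [hr₀def]; split_ifs <;> linarith
  have hvert₀ : (∑ u : Fin (m + 1), eagerRev (fun i => if i = u then H else 0) r₀)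
      = L * (m + 1) + (H - L) * a := by
    have h1 : ∀ u : Fin (m + 1), eagerRev (fun i => if i = u then H else 0) r₀
        = L + (if u ∈ s₀ then H - L else 0) := by
      intro u
      rw [vertex_rev r₀ hr₀ H (hL.trans hLH) u]
      have h2 : r₀ u ≤ H := by simp only [hr₀def]; split_ifs <;> linarith
      rw [if_pos h2]
      simp only [hr₀def]
      split_ifs <;> ring
    rw [Finset.sum_congr rfl (fun u _ => h1 u), Finset.sum_add_distrib,
      Finset.sum_const, Finset.sum_ite_mem, Finset.univ_inter, Finset.sum_const]
    simp only [Finset.card_univ, Fintype.card_fin, nsmul_eq_mul, hs₀c]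
    push_cast
    ring
  have hedge₀ : (∑ e ∈ G.edgeFinset, eagerRev (fun i => if i ∈ e then L else 0) r₀)
      = L * (G.edgeFinset.card : ℝ) := by
    have h1 : ∀ e ∈ G.edgeFinset, eagerRev (fun i => if i ∈ e then L else 0) r₀ = L := by
      intro e he
      induction e using Sym2.ind with
      | _ u v =>
        have hadj : G.Adj u v := SimpleGraph.mem_edgeFinset.1 he
        have huv : u ≠ v := hadj.ne
        have hbid : (fun i => if i ∈ s(u, v) then L else 0) =
            (fun i => if i = u ∨ i = v then L else 0) := by
          funext i; simp [Sym2.mem_iff]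
        rw [hbid, edge_rev r₀ hr₀ L hL u v huv]
        by_cases hus : u ∈ s₀
        · have hvs : v ∉ s₀ := fun h => hs₀i u hus v h hadj
          have e1 : r₀ u = H := by simp [hr₀def, hus]
          have e2 : r₀ v = L := by simp [hr₀def, hvs]
          rw [if_neg (by rw [e1]; linarith), if_pos (le_of_eq e2)]
          exact e2
        · have e1 : r₀ u = L := by simp [hr₀def, hus]
          rw [if_pos (le_of_eq e1)]
          by_cases hvs : v ∈ s₀
          · have e2 : r₀ v = H := by simp [hr₀def, hvs]
            rw [if_neg (by rw [e2]; linarith)]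
            exact e1
          · have e2 : r₀ v = L := by simp [hr₀def, hvs]
            rw [if_pos (le_of_eq e2)]
    rw [Finset.sum_congr rfl h1, Finset.sum_const, nsmul_eq_mul]
    ring
  have hmem : L * ((G.edgeFinset.card : ℝ) + (m + 1)) + (H - L) * a ∈
      {x : ℝ | ∃ r : Fin (m + 1) → ℝ, (∀ i, 0 ≤ r i) ∧
        x = (∑ e ∈ G.edgeFinset, eagerRev (fun i => if i ∈ e then L else 0) r) +
            ∑ u : Fin (m + 1), eagerRev (fun i => if i = u then H else 0) r} :=
    ⟨r₀, hr₀, by rw [hedge₀, hvert₀]; ring⟩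
  have hub : ∀ x ∈ {x : ℝ | ∃ r : Fin (m + 1) → ℝ, (∀ i, 0 ≤ r i) ∧
        x = (∑ e ∈ G.edgeFinset, eagerRev (fun i => if i ∈ e then L else 0) r) +
            ∑ u : Fin (m + 1), eagerRev (fun i => if i = u then H else 0) r},
      x ≤ L * ((G.edgeFinset.card : ℝ) + (m + 1)) + (H - L) * a := by
    rintro x ⟨r, hrr, rfl⟩; exact key r hrr
  exact le_antisymm (csSup_le ⟨_, hmem⟩ hub) (le_csSup ⟨_, hub⟩ hmem)
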